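/- arXiv:1201.0607 — 2 statements merged into one kernel-verified Lean document; each statement's English description precedes it below -/
import Mathlib

section
/- Let d ≥ 2, let A = (a_0,…,a_{d−1}) be a d-tuple of points in general position in ℝ², and let f be a continuous real-valued function on the convex hull of {a_0,…,a_{d−1}}. Define H(x) := Σ_{0≤s<t≤d−1} Q_{st}(x) · ∫_0^1 f(a_s + w(a_t − a_s)) dw. Then H is a polynomial of degree at most d−2 on ℝ², and for all 0 ≤ u < v ≤ d−1, ∫_0^1 H(a_u + w(a_v − a_u)) dw = ∫_0^1 f(a_u + w(a_v − a_u)) dw; that is, H is the Hakopian interpolation polynomial of f at A. -/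
open Finset

/-- Euclidean scalar product on ℝ² ≅ ℂ. -/
noncomputable def inner2 (x y : ℂ) : ℝ := x.re * y.re + x.im * y.im

/-- The univariate polynomial h_{st} associated to a tuple `a` of points of ℝ² ≅ ℂ:
`h_{st}(w) = ∏_{m=0, m≠s}^{d−1} (w − ⟨(a_s−a_t)^⊥, a_m⟩)`, where `x^⊥ = i·x`. -/
noncomputable def hPoly (d s t : ℕ) (a : ℕ → ℂ) : ℝ → ℝ :=
  fun w => ∏ m ∈ (Finset.range d).erase s, (w - inner2 (Complex.I * (a s - a t)) (a m))

/-- The points `a 0, …, a (d-1)` are in general position: no three of them are collinear. -/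
def GenPos (d : ℕ) (a : ℕ → ℂ) : Prop :=
  ∀ i j k, i < d → j < d → k < d → i ≠ j → j ≠ k → i ≠ k →
    ¬ Collinear ℝ ({a i, a j, a k} : Set ℂ)


/-- The polynomial `Q_{st}(x) = h′_{st}(⟨(a_s−a_t)^⊥, x⟩) / h′_{st}(⟨(a_s−a_t)^⊥, a_s⟩)`. -/
noncomputable def Qst (d s t : ℕ) (a : ℕ → ℂ) (x : ℂ) : ℝ :=
  deriv (hPoly d s t a) (inner2 (Complex.I * (a s - a t)) x) /
    deriv (hPoly d s t a) (inner2 (Complex.I * (a s - a t)) (a s))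

/-! Write `n = (a_s − a_t)^⊥` and `c_m = ⟨n, a_m⟩`. Then `c_s = c_t`, so `h_{st}` vanishes at
every `c_m`, and along the segment `[a_u, a_v]` the projection `⟨n, ·⟩` moves affinely from `c_u`
to `c_v`. Hence the mean of `h′_{st}(⟨n, ·⟩)` over the segment is
`(h_{st}(c_v) − h_{st}(c_u)) / (c_v − c_u) = 0` if `c_u ≠ c_v`, and `h′_{st}(c_u)` otherwise.
In the latter case `c_u` is a double root of `h_{st}` unless `{u, v} = {s, t}`, and for
`{u, v} = {s, t}` the mean of `Q_{st}` is `1`. So the segment means of the `Q_{st}` form an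
identity matrix, and `H` interpolates. Each `Q_{st}` is a polynomial of degree `d − 2` in the
linear form `⟨n, x⟩`, which bounds the degree of `H`. -/

open Polynomial

lemma inner2_add_real_mul_sub (v x y : ℂ) (w : ℝ) :
    inner2 v (x + w * (y - x)) = inner2 v x + w * (inner2 v y - inner2 v x) := by
  simp only [inner2, Complex.add_re, Complex.add_im, Complex.mul_re, Complex.mul_im,
    Complex.sub_re, Complex.sub_im, Complex.ofReal_re, Complex.ofReal_im]
  ring

lemma inner2_sub_right (v x y : ℂ) : inner2 v (x - y) = inner2 v x - inner2 v y := by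
  simp only [inner2, Complex.sub_re, Complex.sub_im]; ring

lemma inner2_I_mul_self (z : ℂ) : inner2 (Complex.I * z) z = 0 := by
  simp only [inner2, Complex.mul_re, Complex.mul_im, Complex.I_re, Complex.I_im]; ring

lemma inner2_I_mul_sub_right_eq_left (x y : ℂ) :
    inner2 (Complex.I * (x - y)) y = inner2 (Complex.I * (x - y)) x := by
  have h := inner2_I_mul_self (x - y)
  rw [inner2_sub_right] at h
  linarith

lemma continuous_inner2 (v : ℂ) : Continuous (inner2 v) := by
  unfold inner2; fun_prop

lemma exists_real_mul_eq_of_inner2_I_mul_eq_zero {z u : ℂ} (hz : z ≠ 0)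
    (h : inner2 (Complex.I * z) u = 0) : ∃ r : ℝ, u = r * z := by
  refine ⟨(u / z).re, ?_⟩
  have him : (u / z).im = 0 := by
    simp only [inner2, Complex.mul_re, Complex.mul_im, Complex.I_re, Complex.I_im] at h
    rw [Complex.div_im, ← sub_div, div_eq_zero_iff]
    left
    linarith
  have hreal : (((u / z).re : ℝ) : ℂ) = u / z := Complex.ext (by simp) (by simp [him])
  rw [hreal, div_mul_cancel₀ _ hz]

lemma collinear_of_inner2_I_mul_sub_eq_zero {x y z : ℂ}
    (h : inner2 (Complex.I * (x - y)) (x - z) = 0) : Collinear ℝ ({x, y, z} : Set ℂ) := by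
  rcases eq_or_ne x y with rfl | hxy
  · simpa using collinear_pair ℝ x z
  have h' : inner2 (Complex.I * (y - x)) (z - x) = 0 := by
    rw [← neg_sub x y, ← neg_sub x z]
    simp only [inner2, Complex.mul_re, Complex.mul_im, Complex.neg_re, Complex.neg_im] at h ⊢
    linarith
  obtain ⟨r, hr⟩ := exists_real_mul_eq_of_inner2_I_mul_eq_zero (sub_ne_zero.mpr hxy.symm) h'
  have hz : z ∈ line[ℝ, x, y] := by
    convert AffineMap.lineMap_mem_affineSpan_pair r x y using 1
    rw [AffineMap.lineMap_apply, vsub_eq_sub, vadd_eq_add, Complex.real_smul, ← hr]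
    ring
  have hset : ({x, y, z} : Set ℂ) = {z, x, y} := by
    rw [Set.insert_comm, Set.pair_comm, Set.insert_comm, Set.pair_comm]
  rw [hset]
  exact collinear_insert_of_mem_affineSpan_pair hz

lemma Lagrange.eval_derivative_nodal_eq_zero {R ι : Type*} [CommRing R] {s : Finset ι}
    {v : ι → R} {i j : ι} (hi : i ∈ s) (hj : j ∈ s) (hij : i ≠ j) (hv : v i = v j) :
    (nodal s v).derivative.eval (v i) = 0 := by
  classical
  rw [eval_nodal_derivative_eval_node_eq hi, hv]
  exact eval_nodal_at_node (mem_erase.mpr ⟨hij.symm, hj⟩)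

lemma mul_integral_derivative_eval_affine (p : ℝ[X]) (α β : ℝ) :
    (β - α) * ∫ w in (0:ℝ)..1, p.derivative.eval (α + w * (β - α)) = p.eval β - p.eval α := by
  have hderiv : ∀ w ∈ Set.uIcc (0:ℝ) 1, HasDerivAt (fun w => p.eval (α + w * (β - α)))
      ((β - α) * p.derivative.eval (α + w * (β - α))) w := by
    intro w _
    have haff : HasDerivAt (fun w : ℝ => α + w * (β - α)) (β - α) w := by
      simpa using ((hasDerivAt_id w).mul_const (β - α)).const_add α
    simpa [mul_comm, Function.comp_def] using (p.hasDerivAt _).comp w haff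
  have hcont : Continuous fun w : ℝ => (β - α) * p.derivative.eval (α + w * (β - α)) := by
    fun_prop
  rw [← intervalIntegral.integral_const_mul,
    intervalIntegral.integral_eq_sub_of_hasDerivAt hderiv (hcont.intervalIntegrable _ _)]
  simp

lemma totalDegree_aeval_le {σ R : Type*} [CommSemiring R] (q : R[X]) (P : MvPolynomial σ R) :
    (aeval P q).totalDegree ≤ q.natDegree * P.totalDegree := by
  rw [aeval_def, eval₂_eq_sum, Polynomial.sum]
  refine (MvPolynomial.totalDegree_finsetSum _ _).trans (Finset.sup_le fun e he => ?_)
  calc (MvPolynomial.C (q.coeff e) * P ^ e).totalDegree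
      ≤ (P ^ e).totalDegree := by
        refine (MvPolynomial.totalDegree_mul _ _).trans ?_
        rw [MvPolynomial.totalDegree_C, zero_add]
    _ ≤ e * P.totalDegree := MvPolynomial.totalDegree_pow _ _
    _ ≤ q.natDegree * P.totalDegree := Nat.mul_le_mul_right _ (le_natDegree_of_mem_supp e he)

noncomputable def hNodal (d s t : ℕ) (a : ℕ → ℂ) : ℝ[X] :=
  Lagrange.nodal ((range d).erase s) fun m => inner2 (Complex.I * (a s - a t)) (a m)

section Qst

variable {d s t : ℕ} {a : ℕ → ℂ}

lemma deriv_hPoly (w : ℝ) : deriv (hPoly d s t a) w = (hNodal d s t a).derivative.eval w := by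
  have h : hPoly d s t a = fun w => (hNodal d s t a).eval w := by
    funext w
    rw [hNodal, Lagrange.eval_nodal, hPoly]
  rw [h, Polynomial.deriv]

lemma Qst_eq (x : ℂ) : Qst d s t a x =
    (hNodal d s t a).derivative.eval (inner2 (Complex.I * (a s - a t)) x) /
      (hNodal d s t a).derivative.eval (inner2 (Complex.I * (a s - a t)) (a s)) := by
  rw [Qst, deriv_hPoly, deriv_hPoly]

lemma continuous_Qst : Continuous (Qst d s t a) := by
  simp_rw [funext (Qst_eq (a := a)), div_eq_mul_inv]
  exact (Polynomial.continuous _ |>.comp (continuous_inner2 _)).mul continuous_const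

lemma eval_hNodal_eq_zero (hst : s ≠ t) (ht : t < d) {m : ℕ} (hm : m < d) :
    (hNodal d s t a).eval (inner2 (Complex.I * (a s - a t)) (a m)) = 0 := by
  rcases eq_or_ne m s with rfl | hms
  · rw [← inner2_I_mul_sub_right_eq_left]
    exact Lagrange.eval_nodal_at_node (v := fun m => inner2 _ (a m))
      (mem_erase_of_ne_of_mem hst.symm (mem_range.mpr ht))
  · exact Lagrange.eval_nodal_at_node (v := fun m => inner2 _ (a m))
      (mem_erase_of_ne_of_mem hms (mem_range.mpr hm))

lemma eval_derivative_hNodal_ne_zero (hgen : GenPos d a) (hs : s < d) (ht : t < d)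
    (hst : s ≠ t) :
    (hNodal d s t a).derivative.eval (inner2 (Complex.I * (a s - a t)) (a s)) ≠ 0 := by
  classical
  have htS : t ∈ (range d).erase s := mem_erase_of_ne_of_mem hst.symm (mem_range.mpr ht)
  rw [← inner2_I_mul_sub_right_eq_left, hNodal,
    Lagrange.eval_nodal_derivative_eval_node_eq (v := fun m => inner2 _ (a m)) htS,
    Lagrange.eval_nodal, prod_ne_zero_iff]
  intro k hk hzero
  obtain ⟨hkt, hks, hkd⟩ : k ≠ t ∧ k ≠ s ∧ k < d := by simpa using hk
  rw [inner2_I_mul_sub_right_eq_left, ← inner2_sub_right] at hzero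
  exact hgen s t k hs ht hkd hst (Ne.symm hkt) (Ne.symm hks)
    (collinear_of_inner2_I_mul_sub_eq_zero hzero)

lemma natDegree_derivative_hNodal_le (hs : s < d) :
    (hNodal d s t a).derivative.natDegree ≤ d - 2 := by
  refine (natDegree_derivative_le _).trans ?_
  rw [hNodal, Lagrange.natDegree_nodal, card_erase_of_mem (mem_range.mpr hs), card_range,
    Nat.sub_sub]

end Qst

section Segment

variable {d s t : ℕ} {a : ℕ → ℂ}

lemma integral_Qst_segment (u v : ℕ) :
    ∫ w in (0:ℝ)..1, Qst d s t a (a u + w * (a v - a u)) =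
      (∫ w in (0:ℝ)..1, (hNodal d s t a).derivative.eval
          (inner2 (Complex.I * (a s - a t)) (a u) + w * (inner2 (Complex.I * (a s - a t)) (a v) -
            inner2 (Complex.I * (a s - a t)) (a u)))) /
        (hNodal d s t a).derivative.eval (inner2 (Complex.I * (a s - a t)) (a s)) := by
  simp_rw [Qst_eq, inner2_add_real_mul_sub]
  exact intervalIntegral.integral_div _ _

lemma integral_Qst_segment_self (hgen : GenPos d a) (hs : s < d) (ht : t < d) (hst : s ≠ t) :
    ∫ w in (0:ℝ)..1, Qst d s t a (a s + w * (a t - a s)) = 1 := by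
  rw [integral_Qst_segment, inner2_I_mul_sub_right_eq_left]
  simpa using div_self (eval_derivative_hNodal_ne_zero hgen hs ht hst)

lemma eval_derivative_hNodal_eq_zero {u v : ℕ} (hst : s ≠ t) (ht : t < d) (hu : u < d)
    (hv : v < d) (huv : u ≠ v) (hne : ¬(s = u ∧ t = v)) (hne' : ¬(s = v ∧ t = u))
    (hc : inner2 (Complex.I * (a s - a t)) (a u) = inner2 (Complex.I * (a s - a t)) (a v)) :
    (hNodal d s t a).derivative.eval (inner2 (Complex.I * (a s - a t)) (a u)) = 0 := by
  have hS : ∀ {k}, k ≠ s → k < d → k ∈ (range d).erase s := fun hk hkd =>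
    mem_erase_of_ne_of_mem hk (mem_range.mpr hkd)
  have hct := inner2_I_mul_sub_right_eq_left (a s) (a t)
  have hnodal := @Lagrange.eval_derivative_nodal_eq_zero ℝ ℕ _ ((range d).erase s)
    (fun m => inner2 (Complex.I * (a s - a t)) (a m))
  by_cases hus : u = s
  · subst hus
    rw [← hct]
    exact hnodal (hS hst.symm ht) (hS (Ne.symm huv) hv) (fun htv => hne ⟨rfl, htv⟩) (hct.trans hc)
  by_cases hvs : v = s
  · subst hvs
    rw [hc, ← hct]
    exact hnodal (hS hst.symm ht) (hS hus hu) (fun htu => hne' ⟨rfl, htu⟩) (hct.trans hc.symm)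
  exact hnodal (hS hus hu) (hS hvs hv) huv hc

lemma integral_Qst_segment_eq_zero {u v : ℕ} (hst : s ≠ t) (ht : t < d) (hu : u < d)
    (hv : v < d) (huv : u ≠ v) (hne : ¬(s = u ∧ t = v)) (hne' : ¬(s = v ∧ t = u)) :
    ∫ w in (0:ℝ)..1, Qst d s t a (a u + w * (a v - a u)) = 0 := by
  rw [integral_Qst_segment, div_eq_zero_iff]
  left
  set cu := inner2 (Complex.I * (a s - a t)) (a u)
  set cv := inner2 (Complex.I * (a s - a t)) (a v)
  rcases eq_or_ne cu cv with hc | hc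
  · simpa [← hc] using eval_derivative_hNodal_eq_zero hst ht hu hv huv hne hne' hc
  · have h := mul_integral_derivative_eval_affine (hNodal d s t a) cu cv
    rw [eval_hNodal_eq_zero hst ht hv, eval_hNodal_eq_zero hst ht hu, sub_self] at h
    exact (mul_eq_zero.mp h).resolve_left (sub_ne_zero.mpr hc.symm)

end Segment

noncomputable def evalPlane : MvPolynomial (Fin 2) ℝ →ₗ[ℝ] (ℂ → ℝ) :=
  LinearMap.pi fun x => (MvPolynomial.aeval ![x.re, x.im]).toLinearMap

noncomputable def planePolynomialsLE (n : ℕ) : Submodule ℝ (ℂ → ℝ) :=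
  (MvPolynomial.restrictTotalDegree (Fin 2) ℝ n).map evalPlane

lemma mem_planePolynomialsLE {n : ℕ} {F : ℂ → ℝ} : F ∈ planePolynomialsLE n ↔
    ∃ p : MvPolynomial (Fin 2) ℝ, p.totalDegree ≤ n ∧
      ∀ x : ℂ, F x = MvPolynomial.eval ![x.re, x.im] p := by
  simp only [planePolynomialsLE, Submodule.mem_map, MvPolynomial.mem_restrictTotalDegree,
    funext_iff, evalPlane, LinearMap.pi_apply, AlgHom.toLinearMap_apply]
  exact exists_congr fun p => and_congr_right fun _ => forall_congr' fun x => eq_comm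

lemma eval_inner2_mem_planePolynomialsLE {n : ℕ} (q : ℝ[X]) (hq : q.natDegree ≤ n) (v : ℂ) :
    (fun x => q.eval (inner2 v x)) ∈ planePolynomialsLE n := by
  set ℓ : MvPolynomial (Fin 2) ℝ := MvPolynomial.C v.re * MvPolynomial.X 0 +
    MvPolynomial.C v.im * MvPolynomial.X 1
  have hℓ : ℓ.totalDegree ≤ 1 := by
    refine (MvPolynomial.totalDegree_add _ _).trans (max_le ?_ ?_) <;>
    · refine (MvPolynomial.totalDegree_mul _ _).trans ?_
      rw [MvPolynomial.totalDegree_C, MvPolynomial.totalDegree_X]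
  refine mem_planePolynomialsLE.mpr ⟨aeval ℓ q, ?_, fun x => ?_⟩
  · calc (aeval ℓ q).totalDegree ≤ q.natDegree * ℓ.totalDegree := totalDegree_aeval_le q ℓ
      _ ≤ n * 1 := Nat.mul_le_mul hq hℓ
      _ = n := mul_one n
  · rw [show MvPolynomial.eval ![x.re, x.im] (aeval ℓ q) =
      MvPolynomial.aeval ![x.re, x.im] (aeval ℓ q) from rfl, ← aeval_algHom_apply,
      coe_aeval_eq_eval]
    simp [ℓ, inner2]

lemma Qst_mem_planePolynomialsLE {d s t : ℕ} {a : ℕ → ℂ} (hs : s < d) :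
    Qst d s t a ∈ planePolynomialsLE (d - 2) := by
  have h : Qst d s t a =
      ((hNodal d s t a).derivative.eval (inner2 (Complex.I * (a s - a t)) (a s)))⁻¹ •
        fun x => (hNodal d s t a).derivative.eval (inner2 (Complex.I * (a s - a t)) x) := by
    funext x
    rw [Qst_eq, Pi.smul_apply, smul_eq_mul, div_eq_inv_mul]
  rw [h]
  exact Submodule.smul_mem _ _
    (eval_inner2_mem_planePolynomialsLE _ (natDegree_derivative_hNodal_le hs) _)

lemma integral_Qst_segment_eq_ite {d s t u v : ℕ} {a : ℕ → ℂ} (hgen : GenPos d a) (hst : s < t)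
    (ht : t < d) (huv : u < v) (hv : v < d) :
    ∫ w in (0:ℝ)..1, Qst d s t a (a u + w * (a v - a u)) = if s = u ∧ t = v then 1 else 0 := by
  split_ifs with h
  · obtain ⟨rfl, rfl⟩ := h
    exact integral_Qst_segment_self hgen (hst.trans ht) ht hst.ne
  · exact integral_Qst_segment_eq_zero hst.ne ht (huv.trans hv) hv huv.ne h (by omega)

theorem stmt4_general (d : ℕ) (a : ℕ → ℂ) (hgen : GenPos d a)
    (f : ℂ → ℝ)
    (H : ℂ → ℝ)
    (hH : H = fun x => ∑ s ∈ Finset.range d, ∑ t ∈ Finset.Ico (s + 1) d,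
      Qst d s t a x * ∫ w in (0:ℝ)..1, f (a s + (w : ℂ) * (a t - a s))) :
    (∃ p : MvPolynomial (Fin 2) ℝ, p.totalDegree ≤ d - 2 ∧
        ∀ x : ℂ, H x = MvPolynomial.eval ![x.re, x.im] p) ∧
      ∀ u v : ℕ, u < v → v < d →
        ∫ w in (0:ℝ)..1, H (a u + (w : ℂ) * (a v - a u)) =
          ∫ w in (0:ℝ)..1, f (a u + (w : ℂ) * (a v - a u)) := by
  set F : ℕ → ℕ → ℝ := fun s t => ∫ w in (0:ℝ)..1, f (a s + (w : ℂ) * (a t - a s))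
  have hHsum : H = ∑ s ∈ range d, ∑ t ∈ Ico (s + 1) d, F s t • Qst d s t a := by
    rw [hH]
    ext x
    simp only [Finset.sum_apply, Pi.smul_apply, smul_eq_mul]
    exact sum_congr rfl fun s _ => sum_congr rfl fun t _ => mul_comm _ _
  refine ⟨mem_planePolynomialsLE.mp ?_, fun u v huv hv => ?_⟩
  · rw [hHsum]
    exact Submodule.sum_mem _ fun s hs => Submodule.sum_mem _ fun t _ =>
      Submodule.smul_mem _ _ (Qst_mem_planePolynomialsLE (mem_range.mp hs))
  have hcont : ∀ s t, Continuous fun w : ℝ => Qst d s t a (a u + w * (a v - a u)) * F s t :=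
    fun s t => (continuous_Qst.comp (by fun_prop)).mul continuous_const
  calc ∫ w in (0:ℝ)..1, H (a u + (w : ℂ) * (a v - a u))
      = ∑ s ∈ range d, ∑ t ∈ Ico (s + 1) d,
          (∫ w in (0:ℝ)..1, Qst d s t a (a u + (w : ℂ) * (a v - a u))) * F s t := by
        simp only [hH]
        rw [intervalIntegral.integral_finsetSum fun s _ => (continuous_finsetSum _ fun t _ =>
          hcont s t).intervalIntegrable _ _]
        refine sum_congr rfl fun s _ => ?_
        rw [intervalIntegral.integral_finsetSum fun t _ => (hcont s t).intervalIntegrable _ _]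
        exact sum_congr rfl fun t _ => intervalIntegral.integral_mul_const _ _
    _ = ∑ s ∈ range d, ∑ t ∈ Ico (s + 1) d, if s = u ∧ t = v then F s t else 0 := by
        refine sum_congr rfl fun s _ => sum_congr rfl fun t ht => ?_
        rw [integral_Qst_segment_eq_ite hgen (mem_Ico.mp ht).1 (mem_Ico.mp ht).2 huv hv]
        split_ifs <;> simp
    _ = F u v := by simp [ite_and, huv, hv, huv.trans hv]

theorem stmt4 (d : ℕ) (hd : 2 ≤ d) (a : ℕ → ℂ) (hgen : GenPos d a)
    (f : ℂ → ℝ)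
    (hf : ContinuousOn f (convexHull ℝ {z : ℂ | ∃ m < d, a m = z}))
    (H : ℂ → ℝ)
    (hH : H = fun x => ∑ s ∈ Finset.range d, ∑ t ∈ Finset.Ico (s + 1) d,
      Qst d s t a x * ∫ w in (0:ℝ)..1, f (a s + (w : ℂ) * (a t - a s))) :
    (∃ p : MvPolynomial (Fin 2) ℝ, p.totalDegree ≤ d - 2 ∧
        ∀ x : ℂ, H x = MvPolynomial.eval ![x.re, x.im] p) ∧
      ∀ u v : ℕ, u < v → v < d →
        ∫ w in (0:ℝ)..1, H (a u + (w : ℂ) * (a v - a u)) =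
          ∫ w in (0:ℝ)..1, f (a u + (w : ℂ) * (a v - a u)) :=
  stmt4_general d a hgen f H hH
end

section
/- Let E = (e_n : n ∈ ℕ) be a Leja sequence for the closed unit disk D with e_0 = 1, and let d ≥ 2 with binary expansion d = 2^{n_0} + 2^{n_1} + ⋯ + 2^{n_r}, where n_0 > n_1 > ⋯ > n_r ≥ 0. Then for every 0 ≤ s ≤ d−1, ∏_{m=0, m≠s}^{d−1} |e_s − e_m| ≥ 2^r. -/
open Finset

/-- `e` is a Leja sequence for the closed unit disk `D` with `e 0 = 1`: all points lie in `D`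
and for every `d ≥ 1` the product `∏_{j<d} |z - e j|` over `z ∈ D` is maximized at `z = e d`. -/
def IsLejaSeq (e : ℕ → ℂ) : Prop :=
  e 0 = 1 ∧ (∀ n, ‖e n‖ ≤ 1) ∧
    ∀ d : ℕ, 1 ≤ d → ∀ z : ℂ, ‖z‖ ≤ 1 →
      ∏ j ∈ Finset.range d, ‖z - e j‖ ≤
        ∏ j ∈ Finset.range d, ‖e d - e j‖

/-!
Write `d = 2^{n_0} + ⋯ + 2^{n_r}`. The section `e_0, …, e_{d-1}` is a union of `r + 1`
consecutive blocks, block `i` being the set of `2^{n_i}`-th roots of a unimodular `c_i`, where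
`c_{i+1}^{2^{n_i - n_{i+1}}} = -c_i`. This is proved one point at a time: on the disk every factor
`|z^{2^{n_i}} - c_i|` of `∏_{j<d} |z - e_j|` is at most `2`, some unimodular `z` makes them all
equal to `2`, so the next Leja point does too.

Consequently `∏_{m ≠ s} |e_s - e_m|` is the modulus of the derivative of
`∏_i (z^{2^{n_i}} - c_i)` at `e_s`; if `e_s` lies in block `k` this is
`2^{n_k} ∏_{i ≠ k} |e_s^{2^{n_i}} - c_i|`. The factors with `i < k` equal `2`. The factors with
`i > k` are bounded below by telescoping `|a^{2^{m+1}} - b^{2^{m+1}}| ≤ 2^m |a - b| |a + b|` from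
`|e_s^{2^{n_k}} + c_k| = 2` down to `|e_s^{2^{n_r}} + c_r| ≤ 2`.
-/

open Polynomial

lemma pow_two_pow_eq_pow_two_pow_of_le {M : Type*} [Monoid M] {x y : M} {a b : ℕ}
    (h : x ^ 2 ^ a = y ^ 2 ^ a) (hab : a ≤ b) : x ^ 2 ^ b = y ^ 2 ^ b := by
  obtain ⟨c, rfl⟩ := Nat.exists_eq_add_of_le hab
  rw [pow_add, pow_mul, pow_mul, h]

lemma pow_two_pow_eq_pow_two_pow_of_eq_neg {M : Type*} [Monoid M] [HasDistribNeg M] {x y : M}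
    {a b : ℕ} (h : x ^ 2 ^ a = -y ^ 2 ^ a) (hab : a < b) : x ^ 2 ^ b = y ^ 2 ^ b :=
  pow_two_pow_eq_pow_two_pow_of_le (a := a + 1) (by rw [pow_succ, pow_mul, pow_mul, h, neg_sq]) hab

lemma norm_eq_one_of_pow_eq {K : Type*} [NormedDivisionRing K] {z c : K} {N : ℕ} (hN : N ≠ 0)
    (hz : z ^ N = c) (hc : ‖c‖ = 1) : ‖z‖ = 1 := by
  rwa [← pow_eq_one_iff_of_nonneg (norm_nonneg z) hN, ← norm_pow, hz]

lemma eq_neg_of_two_le_norm_sub {E : Type*} [NormedAddCommGroup E] [NormedSpace ℝ E]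
    [StrictConvexSpace ℝ E] {a b : E} (ha : ‖a‖ ≤ 1) (hb : ‖b‖ = 1) (h : 2 ≤ ‖a - b‖) :
    a = -b := by
  have htri := norm_sub_le a b
  have hsum : ‖a + -b‖ = ‖a‖ + ‖-b‖ := by rw [← sub_eq_add_neg, norm_neg]; linarith
  exact (sameRay_iff_norm_add.2 hsum).eq_of_norm_eq (by rw [norm_neg]; linarith)

lemma norm_pow_two_pow_succ_sub_le {R : Type*} [NormedCommRing R] [NormOneClass R] {x y : R}
    (hx : ‖x‖ ≤ 1) (hy : ‖y‖ ≤ 1) (b : ℕ) :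
    ‖x ^ 2 ^ (b + 1) - y ^ 2 ^ (b + 1)‖ ≤ 2 ^ b * (‖x - y‖ * ‖x + y‖) := by
  induction b with
  | zero => simpa [sq_sub_sq, mul_comm] using norm_mul_le (x + y) (x - y)
  | succ b ih =>
    have hsum : ‖x ^ 2 ^ (b + 1) + y ^ 2 ^ (b + 1)‖ ≤ 2 := by
      refine (norm_add_le _ _).trans ?_
      have := (norm_pow_le x (2 ^ (b + 1))).trans (pow_le_one₀ (norm_nonneg x) hx)
      have := (norm_pow_le y (2 ^ (b + 1))).trans (pow_le_one₀ (norm_nonneg y) hy)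
      linarith
    calc ‖x ^ 2 ^ (b + 1 + 1) - y ^ 2 ^ (b + 1 + 1)‖
        ≤ ‖x ^ 2 ^ (b + 1) - y ^ 2 ^ (b + 1)‖ * ‖x ^ 2 ^ (b + 1) + y ^ 2 ^ (b + 1)‖ := by
          rw [pow_succ 2 (b + 1), pow_mul, pow_mul, sq_sub_sq, mul_comm]
          exact norm_mul_le _ _
      _ ≤ 2 ^ b * (‖x - y‖ * ‖x + y‖) * 2 :=
          mul_le_mul ih hsum (norm_nonneg _) (by positivity)
      _ = 2 ^ (b + 1) * (‖x - y‖ * ‖x + y‖) := by ring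

lemma eval_derivative_prod_of_eval_eq_zero {R ι : Type*} [CommRing R] [DecidableEq ι]
    {s : Finset ι} {f : ι → R[X]} {k : ι} (hk : k ∈ s) {x : R} (hx : (f k).eval x = 0) :
    (derivative (∏ i ∈ s, f i)).eval x =
      (derivative (f k)).eval x * ∏ i ∈ s.erase k, (f i).eval x := by
  rw [← mul_prod_erase s f hk, derivative_mul, eval_add, eval_mul, eval_mul, hx, zero_mul,
    add_zero, eval_prod]

def blockStart (n : ℕ → ℕ) (i : ℕ) : ℕ := ∑ j ∈ range i, 2 ^ n j

lemma blockStart_zero (n : ℕ → ℕ) : blockStart n 0 = 0 := sum_range_zero _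

lemma blockStart_succ (n : ℕ → ℕ) (i : ℕ) : blockStart n (i + 1) = blockStart n i + 2 ^ n i :=
  sum_range_succ _ _

lemma one_le_blockStart_succ (n : ℕ → ℕ) (i : ℕ) : 1 ≤ blockStart n (i + 1) := by
  rw [blockStart_succ]
  have := Nat.one_le_two_pow (n := n i)
  omega

lemma blockStart_mono (n : ℕ → ℕ) : Monotone (blockStart n) := fun _ _ h =>
  sum_le_sum_of_subset (range_subset_range.2 h)

lemma blockStart_update_of_le (n : ℕ → ℕ) {i k : ℕ} (hik : i ≤ k) (m : ℕ) :
    blockStart (Function.update n k m) i = blockStart n i :=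
  sum_congr rfl fun j hj => by rw [Function.update_of_ne (by simp at hj; omega)]

lemma exists_mem_Ico_blockStart {n : ℕ → ℕ} {r s : ℕ} (hs : s < blockStart n (r + 1)) :
    ∃ k ≤ r, s ∈ Ico (blockStart n k) (blockStart n (k + 1)) := by
  induction r with
  | zero => exact ⟨0, le_rfl, mem_Ico.2 ⟨by simp [blockStart_zero], hs⟩⟩
  | succ r ih =>
    by_cases h : s < blockStart n (r + 1)
    · obtain ⟨k, hk, hsk⟩ := ih h
      exact ⟨k, hk.trans r.le_succ, hsk⟩
    · exact ⟨r + 1, le_rfl, mem_Ico.2 ⟨not_lt.1 h, hs⟩⟩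

lemma prod_range_blockStart {M : Type*} [CommMonoid M] (f : ℕ → M) (n : ℕ → ℕ) (b : ℕ) :
    ∏ m ∈ range (blockStart n b), f m =
      ∏ i ∈ range b, ∏ m ∈ Ico (blockStart n i) (blockStart n (i + 1)), f m := by
  induction b with
  | zero => simp [blockStart_zero]
  | succ b ih =>
    rw [prod_range_succ, ← ih, prod_range_mul_prod_Ico _ (blockStart_mono n b.le_succ)]

/-- Block `i` of the section `e 0, …, e (blockStart n (r + 1) - 1)` is the set of
`2 ^ n i`-th roots of `σ i ^ 2 ^ n i`; the point `σ i` itself only fixes the rotation. -/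
structure BlockDecomp (e : ℕ → ℂ) (r : ℕ) (n : ℕ → ℕ) (σ : ℕ → ℂ) : Prop where
  exp_lt : ∀ i < r, n (i + 1) < n i
  norm_eq_one : ∀ i ≤ r, ‖σ i‖ = 1
  chain : ∀ i < r, σ (i + 1) ^ 2 ^ n i = -σ i ^ 2 ^ n i
  prod_block : ∀ i ≤ r, ∀ z : ℂ,
    ∏ m ∈ Ico (blockStart n i) (blockStart n (i + 1)), (z - e m) = z ^ 2 ^ n i - σ i ^ 2 ^ n i

namespace BlockDecomp

variable {e : ℕ → ℂ} {r : ℕ} {n : ℕ → ℕ} {σ : ℕ → ℂ}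

lemma exp_lt_of_lt (hB : BlockDecomp e r n σ) {i j : ℕ} (hij : i < j) (hj : j ≤ r) :
    n j < n i := by
  induction j, hij using Nat.le_induction with
  | base => exact hB.exp_lt i hj
  | succ j hij ih => exact (hB.exp_lt j hj).trans (ih (by omega))

lemma chain_pow (hB : BlockDecomp e r n σ) {i j : ℕ} (hij : i < j) (hj : j ≤ r) :
    σ j ^ 2 ^ n i = -σ i ^ 2 ^ n i := by
  induction j, hij using Nat.le_induction with
  | base => exact hB.chain i hj
  | succ j hij ih =>
    rw [pow_two_pow_eq_pow_two_pow_of_eq_neg (hB.chain j hj) (hB.exp_lt_of_lt hij (by omega)),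
      ih (by omega)]

lemma pow_eq_neg_of_pow_eq (hB : BlockDecomp e r n σ) {z : ℂ} {i k : ℕ} (hk : k ≤ r)
    (hz : z ^ 2 ^ n k = σ k ^ 2 ^ n k) (hik : i < k) : z ^ 2 ^ n i = -σ i ^ 2 ^ n i := by
  rw [pow_two_pow_eq_pow_two_pow_of_le hz (hB.exp_lt_of_lt hik hk).le, hB.chain_pow hik hk]

lemma pow_eq_neg_of_pow_eq_neg (hB : BlockDecomp e r n σ) {z : ℂ}
    (hz : z ^ 2 ^ n r = -σ r ^ 2 ^ n r) {i : ℕ} (hi : i ≤ r) : z ^ 2 ^ n i = -σ i ^ 2 ^ n i := by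
  rcases hi.lt_or_eq with hi | rfl
  · rw [pow_two_pow_eq_pow_two_pow_of_eq_neg hz (hB.exp_lt_of_lt hi le_rfl),
      hB.chain_pow hi le_rfl]
  · exact hz

lemma norm_pow_sub_le_two (hB : BlockDecomp e r n σ) {z : ℂ} (hz : ‖z‖ ≤ 1) {i : ℕ}
    (hi : i ≤ r) : ‖z ^ 2 ^ n i - σ i ^ 2 ^ n i‖ ≤ 2 := by
  refine (norm_sub_le _ _).trans ?_
  rw [norm_pow, norm_pow, hB.norm_eq_one i hi, one_pow]
  linarith [pow_le_one₀ (n := 2 ^ n i) (norm_nonneg z) hz]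

lemma norm_neg_sub_eq_two (hB : BlockDecomp e r n σ) {i : ℕ} (hi : i ≤ r) :
    ‖-σ i ^ 2 ^ n i - σ i ^ 2 ^ n i‖ = 2 := by
  rw [← neg_add', norm_neg, ← two_mul, norm_mul, norm_pow, hB.norm_eq_one i hi]
  norm_num

lemma prod_range (hB : BlockDecomp e r n σ) (z : ℂ) :
    ∏ m ∈ range (blockStart n (r + 1)), (z - e m) =
      ∏ i ∈ range (r + 1), (z ^ 2 ^ n i - σ i ^ 2 ^ n i) := by
  rw [prod_range_blockStart]
  exact prod_congr rfl fun i hi => hB.prod_block i (Nat.lt_succ_iff.1 (mem_range.1 hi)) z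

lemma pow_eq_of_mem_block (hB : BlockDecomp e r n σ) {k s : ℕ} (hk : k ≤ r)
    (hs : s ∈ Ico (blockStart n k) (blockStart n (k + 1))) :
    e s ^ 2 ^ n k = σ k ^ 2 ^ n k := by
  rw [← sub_eq_zero, ← hB.prod_block k hk]
  exact prod_eq_zero hs (sub_self _)

lemma extend (hB : BlockDecomp e r n σ) {m : ℕ} {ρ : ℂ} (hm : m < n r) (hρ : ‖ρ‖ = 1)
    (hρr : ρ ^ 2 ^ n r = -σ r ^ 2 ^ n r)
    (hblock : ∀ z : ℂ, ∏ j ∈ Ico (blockStart n (r + 1)) (blockStart n (r + 1) + 2 ^ m),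
      (z - e j) = z ^ 2 ^ m - ρ ^ 2 ^ m) :
    BlockDecomp e (r + 1) (Function.update n (r + 1) m) (Function.update σ (r + 1) ρ) := by
  refine ⟨fun i hi => ?_, fun i hi => ?_, fun i hi => ?_, fun i hi z => ?_⟩
  · rcases (Nat.lt_succ_iff.1 hi).lt_or_eq with hi | rfl
    · simpa [Function.update_of_ne (show i ≠ r + 1 by omega),
        Function.update_of_ne (show i + 1 ≠ r + 1 by omega)] using hB.exp_lt i hi
    · simpa [Function.update_of_ne (show i ≠ i + 1 by omega)] using hm
  · rcases hi.lt_or_eq with hi | rfl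
    · simpa [Function.update_of_ne (show i ≠ r + 1 by omega)] using hB.norm_eq_one i (by omega)
    · simpa using hρ
  · rcases (Nat.lt_succ_iff.1 hi).lt_or_eq with hi | rfl
    · simpa [Function.update_of_ne (show i ≠ r + 1 by omega),
        Function.update_of_ne (show i + 1 ≠ r + 1 by omega)] using hB.chain i hi
    · simpa [Function.update_of_ne (show i ≠ i + 1 by omega)] using hρr
  · rcases hi.lt_or_eq with hi | rfl
    · rw [blockStart_update_of_le n (by omega), blockStart_update_of_le n hi]
      simpa [Function.update_of_ne (show i ≠ r + 1 by omega)] using hB.prod_block i (by omega) z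
    · rw [blockStart_succ _ (r + 1), blockStart_update_of_le n le_rfl]
      simpa using hblock z

lemma two_pow_mul_norm_add_le (hB : BlockDecomp e r n σ) {w : ℂ} (hw : ‖w‖ ≤ 1) {j k : ℕ}
    (hkj : k ≤ j) (hj : j ≤ r) :
    2 ^ (n j + j) * ‖w ^ 2 ^ n k + σ k ^ 2 ^ n k‖ ≤
      2 ^ (n k + k) * (∏ i ∈ Ico (k + 1) (j + 1), ‖w ^ 2 ^ n i - σ i ^ 2 ^ n i‖) *
        ‖w ^ 2 ^ n j + σ j ^ 2 ^ n j‖ := by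
  induction j, hkj using Nat.le_induction with
  | base => simp
  | succ j hkj ih =>
    obtain ⟨b, hb⟩ := Nat.exists_eq_add_of_lt (hB.exp_lt j hj)
    have hpow : ∀ z : ℂ, z ^ 2 ^ n j = (z ^ 2 ^ n (j + 1)) ^ 2 ^ (b + 1) := fun z => by
      rw [← pow_mul, ← pow_add, hb]; ring_nf
    have hunit : ∀ z : ℂ, ‖z‖ ≤ 1 → ‖z ^ 2 ^ n (j + 1)‖ ≤ 1 := fun z hz => by
      rw [norm_pow]; exact pow_le_one₀ (norm_nonneg z) hz
    have hstep : ‖w ^ 2 ^ n j + σ j ^ 2 ^ n j‖ ≤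
        2 ^ b * (‖w ^ 2 ^ n (j + 1) - σ (j + 1) ^ 2 ^ n (j + 1)‖ *
          ‖w ^ 2 ^ n (j + 1) + σ (j + 1) ^ 2 ^ n (j + 1)‖) := by
      rw [← neg_neg (σ j ^ 2 ^ n j), ← hB.chain j hj, ← sub_eq_add_neg, hpow w, hpow (σ (j + 1))]
      exact norm_pow_two_pow_succ_sub_le (hunit w hw) (hunit _ (hB.norm_eq_one (j + 1) hj).le) b
    have hP : 0 ≤ 2 ^ (n k + k) * ∏ i ∈ Ico (k + 1) (j + 1), ‖w ^ 2 ^ n i - σ i ^ 2 ^ n i‖ := by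
      positivity
    rw [prod_Ico_succ_top (by omega : k + 1 ≤ j + 1)]
    refine le_of_mul_le_mul_right ?_ (by positivity : (0 : ℝ) < 2 ^ b)
    calc 2 ^ (n (j + 1) + (j + 1)) * ‖w ^ 2 ^ n k + σ k ^ 2 ^ n k‖ * 2 ^ b
        = 2 ^ (n j + j) * ‖w ^ 2 ^ n k + σ k ^ 2 ^ n k‖ := by rw [hb]; ring
      _ ≤ _ := ih (by omega)
      _ ≤ _ := mul_le_mul_of_nonneg_left hstep hP
      _ = _ := by ring

lemma two_pow_le_prod_erase (hB : BlockDecomp e r n σ) {w : ℂ} (hw : ‖w‖ ≤ 1) {k : ℕ}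
    (hk : k ≤ r) (hwk : w ^ 2 ^ n k = σ k ^ 2 ^ n k) :
    (2 : ℝ) ^ r ≤ 2 ^ n k * ∏ i ∈ (range (r + 1)).erase k, ‖w ^ 2 ^ n i - σ i ^ 2 ^ n i‖ := by
  have hsplit : (range (r + 1)).erase k = range k ∪ Ico (k + 1) (r + 1) := by
    ext i; simp only [mem_erase, mem_range, mem_union, mem_Ico]; omega
  have hdisj : Disjoint (range k) (Ico (k + 1) (r + 1)) := by
    rw [disjoint_left]; intro i hi hi'; simp only [mem_range, mem_Ico] at hi hi'; omega
  have hhead : ∏ i ∈ range k, ‖w ^ 2 ^ n i - σ i ^ 2 ^ n i‖ = 2 ^ k := by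
    rw [prod_congr rfl fun i hi => by
      rw [hB.pow_eq_neg_of_pow_eq hk hwk (mem_range.1 hi),
        hB.norm_neg_sub_eq_two (by simp at hi; omega)], prod_const, card_range]
  have hk2 : ‖w ^ 2 ^ n k + σ k ^ 2 ^ n k‖ = 2 := by
    rw [hwk, ← two_mul, norm_mul, norm_pow, hB.norm_eq_one k hk]; norm_num
  have hr2 : ‖w ^ 2 ^ n r + σ r ^ 2 ^ n r‖ ≤ 2 := by
    refine (norm_add_le _ _).trans ?_
    rw [norm_pow, norm_pow, hB.norm_eq_one r le_rfl, one_pow]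
    linarith [pow_le_one₀ (n := 2 ^ n r) (norm_nonneg w) hw]
  have htel := hB.two_pow_mul_norm_add_le hw hk le_rfl
  rw [hk2] at htel
  rw [hsplit, prod_union hdisj, hhead]
  have hP := prod_nonneg fun i (_ : i ∈ Ico (k + 1) (r + 1)) =>
    norm_nonneg (w ^ 2 ^ n i - σ i ^ 2 ^ n i)
  calc (2 : ℝ) ^ r ≤ 2 ^ (n r + r) := pow_le_pow_right₀ one_le_two (Nat.le_add_left r (n r))
    _ ≤ 2 ^ (n k + k) * ∏ i ∈ Ico (k + 1) (r + 1), ‖w ^ 2 ^ n i - σ i ^ 2 ^ n i‖ := by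
      nlinarith [mul_le_mul_of_nonneg_left hr2
        (mul_nonneg (by positivity : (0 : ℝ) ≤ 2 ^ (n k + k)) hP)]
    _ = _ := by ring

lemma norm_prod_erase_eq (hB : BlockDecomp e r n σ) {k s : ℕ} (hk : k ≤ r)
    (hs : s ∈ Ico (blockStart n k) (blockStart n (k + 1))) (hs1 : ‖e s‖ = 1) :
    ∏ m ∈ (range (blockStart n (r + 1))).erase s, ‖e s - e m‖ =
      2 ^ n k * ∏ i ∈ (range (r + 1)).erase k, ‖e s ^ 2 ^ n i - σ i ^ 2 ^ n i‖ := by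
  classical
  have hnodal : Lagrange.nodal (range (blockStart n (r + 1))) e =
      ∏ i ∈ range (r + 1), (X ^ 2 ^ n i - C (σ i ^ 2 ^ n i)) :=
    Polynomial.funext fun z => by simp [Lagrange.eval_nodal, eval_prod, hB.prod_range]
  have hsmem : s ∈ range (blockStart n (r + 1)) :=
    mem_range.2 ((mem_Ico.1 hs).2.trans_le (blockStart_mono n (by omega)))
  rw [← norm_prod, ← Lagrange.eval_nodal, ← Lagrange.eval_nodal_derivative_eval_node_eq hsmem,
    hnodal, eval_derivative_prod_of_eval_eq_zero (k := k) (mem_range.2 (by omega))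
      (by simp [hB.pow_eq_of_mem_block hk hs])]
  simp [derivative_X_pow, -map_pow, hs1]

end BlockDecomp

namespace IsLejaSeq

variable {e : ℕ → ℂ} {r : ℕ} {n : ℕ → ℕ} {σ : ℕ → ℂ}

lemma pow_next_eq_neg (he : IsLejaSeq e) (hB : BlockDecomp e r n σ) :
    e (blockStart n (r + 1)) ^ 2 ^ n r = -σ r ^ 2 ^ n r := by
  have hprod : ∀ z, ∏ m ∈ range (blockStart n (r + 1)), ‖z - e m‖ =
      ∏ i ∈ range (r + 1), ‖z ^ 2 ^ n i - σ i ^ 2 ^ n i‖ := fun z => by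
    rw [← norm_prod, hB.prod_range, norm_prod]
  -- `z₀` makes every factor equal to `2`, so the Leja point must make the last one `2` as well.
  obtain ⟨z₀, hz₀⟩ :=
    IsAlgClosed.exists_pow_nat_eq (-σ r ^ 2 ^ n r) (by positivity : 0 < 2 ^ n r)
  have hnorm₀ : ‖z₀‖ = 1 := norm_eq_one_of_pow_eq (by positivity) hz₀
    (by rw [norm_neg, norm_pow, hB.norm_eq_one r le_rfl, one_pow])
  have hleja := he.2.2 _ (one_le_blockStart_succ n r) z₀ hnorm₀.le
  rw [hprod, hprod, prod_congr rfl fun i hi => by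
    rw [hB.pow_eq_neg_of_pow_eq_neg hz₀ (Nat.lt_succ_iff.1 (mem_range.1 hi)),
      hB.norm_neg_sub_eq_two (Nat.lt_succ_iff.1 (mem_range.1 hi))], prod_const, card_range,
    prod_range_succ] at hleja
  have hhead : ∏ i ∈ range r, ‖e (blockStart n (r + 1)) ^ 2 ^ n i - σ i ^ 2 ^ n i‖ ≤ 2 ^ r := by
    simpa using prod_le_prod (fun i _ => norm_nonneg _)
      (fun i hi => hB.norm_pow_sub_le_two (he.2.1 _) (mem_range.1 hi).le)
  have hlast : 2 ≤ ‖e (blockStart n (r + 1)) ^ 2 ^ n r - σ r ^ 2 ^ n r‖ := by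
    rw [pow_succ] at hleja
    nlinarith [mul_le_mul_of_nonneg_right hhead (norm_nonneg
      (e (blockStart n (r + 1)) ^ 2 ^ n r - σ r ^ 2 ^ n r)), pow_pos (two_pos (α := ℝ)) r]
  refine eq_neg_of_two_le_norm_sub ?_ (by rw [norm_pow, hB.norm_eq_one r le_rfl, one_pow]) hlast
  rw [norm_pow]
  exact pow_le_one₀ (norm_nonneg _) (he.2.1 _)

lemma exists_next_block (he : IsLejaSeq e) (m : ℕ) :
    ∀ {r : ℕ} {n : ℕ → ℕ} {σ : ℕ → ℂ}, BlockDecomp e r n σ → m ≤ n r →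
      ∃ ρ : ℂ, ‖ρ‖ = 1 ∧ ρ ^ 2 ^ n r = -σ r ^ 2 ^ n r ∧
        ∀ z : ℂ, ∏ j ∈ Ico (blockStart n (r + 1)) (blockStart n (r + 1) + 2 ^ m), (z - e j) =
          z ^ 2 ^ m - ρ ^ 2 ^ m := by
  induction m with
  | zero =>
    intro r n σ hB _
    have hnext := he.pow_next_eq_neg hB
    refine ⟨_, norm_eq_one_of_pow_eq (by positivity) hnext
      (by rw [norm_neg, norm_pow, hB.norm_eq_one r le_rfl, one_pow]), hnext, fun z => ?_⟩
    simp
  | succ m ih =>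
    -- A block of size `2 ^ (m + 1)` is a block of size `2 ^ m` followed by one more,
    -- found by applying the induction hypothesis to the extended decomposition.
    intro r n σ hB hm
    obtain ⟨ρ, hρ, hρr, hblock⟩ := ih hB (by omega)
    obtain ⟨ρ', -, hρ', hblock'⟩ := ih (hB.extend (by omega) hρ hρr hblock) (by simp)
    simp only [blockStart_succ _ (r + 1), blockStart_update_of_le n le_rfl,
      Function.update_self] at hblock' hρ'
    refine ⟨ρ, hρ, hρr, fun z => ?_⟩
    rw [pow_succ, pow_mul, ← prod_Ico_consecutive _ (Nat.le_add_right _ (2 ^ m))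
      (by omega : blockStart n (r + 1) + 2 ^ m ≤ blockStart n (r + 1) + 2 ^ m * 2), hblock z,
      show blockStart n (r + 1) + 2 ^ m * 2 = blockStart n (r + 1) + 2 ^ m + 2 ^ m by ring,
      hblock' z, hρ']
    ring

lemma prod_range_two_pow (he : IsLejaSeq e) (N : ℕ) (z : ℂ) :
    ∏ j ∈ range (2 ^ N), (z - e j) = z ^ 2 ^ N - 1 := by
  induction N generalizing z with
  | zero => simp [he.1]
  | succ N ih =>
    have hB : BlockDecomp e 0 (fun _ => N) (fun _ => 1) :=
      ⟨by simp, by simp, by simp, fun i hi z => by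
        obtain rfl : i = 0 := by omega
        simpa [blockStart] using ih z⟩
    obtain ⟨ρ, -, hρ, hblock⟩ := he.exists_next_block N hB le_rfl
    simp only [one_pow] at hρ
    have h := hblock z
    simp only [zero_add, blockStart, range_one, sum_singleton, hρ] at h
    rw [pow_succ, pow_mul, ← prod_range_mul_prod_Ico _ (Nat.le_mul_of_pos_right _ two_pos), ih,
      mul_two, h]
    ring

lemma exists_blockDecomp (he : IsLejaSeq e) (hdec : ∀ j < r, n (j + 1) < n j) :
    ∃ σ, BlockDecomp e r n σ := by
  induction r with
  | zero => exact ⟨fun _ => 1, by simp, by simp, by simp, fun i hi z => by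
      obtain rfl : i = 0 := by omega
      simpa [blockStart] using he.prod_range_two_pow (n 0) z⟩
  | succ r ih =>
    obtain ⟨σ, hB⟩ := ih fun j hj => hdec j (by omega)
    obtain ⟨ρ, hρ, hρr, hblock⟩ :=
      he.exists_next_block (n (r + 1)) hB (hdec r r.lt_succ_self).le
    refine ⟨Function.update σ (r + 1) ρ, ?_⟩
    simpa using hB.extend (hdec r r.lt_succ_self) hρ hρr hblock

end IsLejaSeq

theorem stmt12_general (e : ℕ → ℂ) (he : IsLejaSeq e) (d r : ℕ) (n : ℕ → ℕ)
    (hdec : ∀ j < r, n (j + 1) < n j)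
    (hbin : d = ∑ j ∈ Finset.range (r + 1), 2 ^ (n j))
    (s : ℕ) (hs : s < d) :
    (2 : ℝ) ^ r ≤ ∏ m ∈ (Finset.range d).erase s, ‖e s - e m‖ := by
  obtain ⟨σ, hB⟩ := he.exists_blockDecomp hdec
  obtain rfl : d = blockStart n (r + 1) := hbin
  obtain ⟨k, hk, hsk⟩ := exists_mem_Ico_blockStart hs
  have hroot := hB.pow_eq_of_mem_block hk hsk
  have hnorm : ‖e s‖ = 1 := norm_eq_one_of_pow_eq (by positivity) hroot
    (by rw [norm_pow, hB.norm_eq_one k hk, one_pow])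
  rw [hB.norm_prod_erase_eq hk hsk hnorm]
  exact hB.two_pow_le_prod_erase hnorm.le hk hroot

theorem stmt12 (e : ℕ → ℂ) (he : IsLejaSeq e) (d r : ℕ) (n : ℕ → ℕ)
    (hd : 2 ≤ d) (hdec : ∀ j < r, n (j + 1) < n j)
    (hbin : d = ∑ j ∈ Finset.range (r + 1), 2 ^ (n j))
    (s : ℕ) (hs : s < d) :
    (2 : ℝ) ^ r ≤ ∏ m ∈ (Finset.range d).erase s, ‖e s - e m‖ :=
  stmt12_general e he d r n hdec hbin s hs
end
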